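/- Let v₁,…,vₙ : 2^I → ℝ≥0 be gross substitutes valuations satisfying the local improvement property, and let p : I → ℝ≥0 be item prices such that for every agent i and every C ∈ local(B_i), u_i(p, B_i) > u_i(p, C), where B = (B₁,…,Bₙ) is an allocation. Then for every agent i, the demand set D_i(I, p) equals {B_i}. -/

import Mathlib

/-- `localSet A`: all sets obtained from `A` by adding at most one item and removing at most
one item (other than `A` itself). -/
def localSet {I : Type*} [DecidableEq I] (A : Finset I) : Set (Finset I) :=
  {B | B ≠ A ∧ (B \ A).card ≤ 1 ∧ (A \ B).card ≤ 1}

/-- The demand correspondence of a valuation `v` at item prices `p`. -/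
def demand {I : Type*} [Fintype I] [DecidableEq I] (v : Finset I → ℝ) (p : I → ℝ) :
    Set (Finset I) :=
  {S | ∀ T : Finset I, v T - ∑ j ∈ T, p j ≤ v S - ∑ j ∈ S, p j}

/-- The local improvement (LI) property of gross substitutes valuations. -/
def LocalImprovement {I : Type*} [Fintype I] [DecidableEq I] (v : Finset I → ℝ) : Prop :=
  ∀ p : I → ℝ, (∀ j, 0 ≤ p j) → ∀ A : Finset I, A ∉ demand v p →
    ∃ B ∈ localSet A, v A - ∑ j ∈ A, p j < v B - ∑ j ∈ B, p j

section LocalOptimum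

variable {I : Type*} [Fintype I] [DecidableEq I] {v : Finset I → ℝ} {p : I → ℝ} {A : Finset I}

theorem mem_demand_of_forall_localSet_lt (hLI : LocalImprovement v) (hp : ∀ j, 0 ≤ p j)
    (hA : ∀ C ∈ localSet A, v C - ∑ j ∈ C, p j < v A - ∑ j ∈ A, p j) :
    A ∈ demand v p := by
  by_contra hnot
  obtain ⟨C, hC, hlt⟩ := hLI p hp A hnot
  exact (hA C hC).not_gt hlt

theorem demand_eq_singleton_of_forall_localSet_lt (hLI : LocalImprovement v)
    (hp : ∀ j, 0 ≤ p j)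
    (hlem : (∃ C ∈ demand v p, C ≠ A) → ∃ C ∈ localSet A, C ∈ demand v p)
    (hA : ∀ C ∈ localSet A, v C - ∑ j ∈ C, p j < v A - ∑ j ∈ A, p j) :
    demand v p = {A} := by
  have hAd : A ∈ demand v p := mem_demand_of_forall_localSet_lt hLI hp hA
  refine Set.eq_singleton_iff_unique_mem.2 ⟨hAd, fun S hS => ?_⟩
  by_contra hSA
  obtain ⟨C, hCloc, hCd⟩ := hlem ⟨S, hS, hSA⟩
  exact (hA C hCloc).not_ge (hCd A)

end LocalOptimum

theorem stmt_11 {I : Type*} [Fintype I] [DecidableEq I] {n : ℕ}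
    (v : Fin n → Finset I → ℝ)
    (hLI : ∀ i, LocalImprovement (v i))
    (p : I → ℝ) (hp : ∀ j, 0 ≤ p j)
    (hlem : ∀ i, ∀ A ∈ demand (v i) p, (∃ C ∈ demand (v i) p, C ≠ A) →
      ∃ B ∈ localSet A, B ∈ demand (v i) p)
    (B : Fin n → Finset I)
    (hstrict : ∀ i, ∀ C ∈ localSet (B i),
      v i C - ∑ j ∈ C, p j < v i (B i) - ∑ j ∈ B i, p j) :
    ∀ i, demand (v i) p = {B i} := fun i =>
  demand_eq_singleton_of_forall_localSet_lt (hLI i) hp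
    (hlem i (B i) (mem_demand_of_forall_localSet_lt (hLI i) hp (hstrict i))) (hstrict i)
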